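/- Vertices of an optimal restricted mean are section-optimal: let (X,ρ) be a metric space, let T = {τ₁,…,τₙ} be a set of point sequences over X, let p ∈ [1,∞), ℓ ≥ 2, and let c = (c₁,…,c_{ℓ'}) with ℓ' ≤ ℓ attain the minimum of cost_p^p(T,·) over X^{≤ℓ}. For each i ∈ [n], let W_i be an optimal p-warping between c and τ_i, and for j ∈ [ℓ'] let S_j = { τ_{i,k} : i ∈ [n], (j,k) ∈ W_i } be the j-th section of c. Then for every j ∈ [ℓ'] and every w ∈ X, Σ_{v ∈ S_j} ρ(c_j, v)^p ≤ Σ_{v ∈ S_j} ρ(w, v)^p (where the sums count multiplicity of the matched vertices). -/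
import Mathlib


open scoped BigOperators

/-- An `(m₁, m₂)`-warping (with 0-based indices): a sequence of index pairs starting at
`(0,0)`, ending at `(m₁-1, m₂-1)`, whose consecutive increments lie in
`{(0,1), (1,0), (1,1)}`. -/
def IsWarping (m₁ m₂ : ℕ) (W : List (ℕ × ℕ)) : Prop :=
  W ≠ [] ∧ W.head? = some (0, 0) ∧ W.getLast? = some (m₁ - 1, m₂ - 1) ∧
    ∀ k, k + 1 < W.length →
      W.getD (k + 1) (0, 0) = ((W.getD k (0, 0)).1, (W.getD k (0, 0)).2 + 1) ∨
      W.getD (k + 1) (0, 0) = ((W.getD k (0, 0)).1 + 1, (W.getD k (0, 0)).2) ∨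
      W.getD (k + 1) (0, 0) = ((W.getD k (0, 0)).1 + 1, (W.getD k (0, 0)).2 + 1)

/-- The cost `Σ_{(i,j) ∈ W} ρ(σ_i, τ_j)^p` of a warping `W`. -/
noncomputable def warpCost {X : Type*} [MetricSpace X] [Inhabited X]
    (p : ℝ) (σ τ : List X) (W : List (ℕ × ℕ)) : ℝ :=
  (W.map fun ij => dist (σ.getD ij.1 default) (τ.getD ij.2 default) ^ p).sum

/-- The `p`-dynamic time warping distance between two point sequences. -/
noncomputable def dtw {X : Type*} [MetricSpace X] [Inhabited X] (p : ℝ) (σ τ : List X) : ℝ :=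
  sInf { c : ℝ | ∃ W, IsWarping σ.length τ.length W ∧ c = warpCost p σ τ W ^ (1 / p) }

/-- `cost_p^q(T, c) = Σ_{τ ∈ T} dtw_p(c, τ)^q`. -/
noncomputable def dtwCost {X : Type*} [MetricSpace X] [Inhabited X]
    (p q : ℝ) (T : Finset (List X)) (c : List X) : ℝ :=
  ∑ τ ∈ T, dtw p c τ ^ q

/-- `σ` is a point sequence of complexity at most `ℓ`, i.e. `σ ∈ X^{≤ℓ}`. -/
def SeqLE {X : Type*} (ℓ : ℕ) (σ : List X) : Prop := 2 ≤ σ.length ∧ σ.length ≤ ℓ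

/-- `W` is an optimal `p`-warping between `σ` and `τ`. -/
def IsOptWarping {X : Type*} [MetricSpace X] [Inhabited X]
    (p : ℝ) (σ τ : List X) (W : List (ℕ × ℕ)) : Prop :=
  IsWarping σ.length τ.length W ∧
    ∀ W', IsWarping σ.length τ.length W' → warpCost p σ τ W ≤ warpCost p σ τ W'

lemma warpCost_nonneg' {X : Type*} [MetricSpace X] [Inhabited X]
    (p : ℝ) (σ τ : List X) (W : List (ℕ × ℕ)) : 0 ≤ warpCost p σ τ W := by
  apply List.sum_nonneg
  intro x hx
  simp only [List.mem_map] at hx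
  obtain ⟨ij, -, rfl⟩ := hx
  positivity

lemma sum_map_split' (l : List (ℕ × ℕ)) (f : ℕ × ℕ → ℝ) (P : ℕ × ℕ → Prop) [DecidablePred P] :
    (l.map f).sum = ((l.filter fun q => P q).map f).sum
      + ((l.filter fun q => ¬ P q).map f).sum := by
  induction l with
  | nil => simp
  | cons a l ih =>
    by_cases h : P a <;> simp [h, ih] <;> ring

lemma dtw_eq_of_opt' {X : Type*} [MetricSpace X] [Inhabited X]
    (p : ℝ) (hp : 1 ≤ p) (σ τ : List X) (W : List (ℕ × ℕ))
    (h : IsOptWarping p σ τ W) : dtw p σ τ = warpCost p σ τ W ^ (1 / p) := by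
  apply IsLeast.csInf_eq
  constructor
  · exact ⟨W, h.1, rfl⟩
  · rintro x ⟨W', hW', rfl⟩
    exact Real.rpow_le_rpow (warpCost_nonneg' p σ τ W) (h.2 W' hW')
      (by positivity)

lemma dtw_nonneg' {X : Type*} [MetricSpace X] [Inhabited X]
    (p : ℝ) (σ τ : List X) : 0 ≤ dtw p σ τ := by
  apply Real.sInf_nonneg
  rintro x ⟨W', hW', rfl⟩
  exact Real.rpow_nonneg (warpCost_nonneg' p σ τ W') _

lemma dtw_le' {X : Type*} [MetricSpace X] [Inhabited X]
    (p : ℝ) (σ τ : List X) (W : List (ℕ × ℕ))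
    (h : IsWarping σ.length τ.length W) : dtw p σ τ ≤ warpCost p σ τ W ^ (1 / p) := by
  apply csInf_le
  · exact ⟨0, fun x ⟨W', hW', hx⟩ => hx ▸ Real.rpow_nonneg (warpCost_nonneg' p σ τ W') _⟩
  · exact ⟨W, h, rfl⟩

/-- **Vertices of an optimal restricted mean are section-optimal**
(central observation in Section `sec:exact_computation`): if `c` attains the minimum of
`cost_p^p(T,·)` over `X^{≤ℓ}` and `W τ` is an optimal `p`-warping between `c` and each
`τ ∈ T`, then each vertex `c_j` minimizes, over all `w ∈ X`, the sum (with multiplicity)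
of `ρ(·, v)^p` over the vertices `v` of its section `S_j`. -/
theorem optimal_mean_vertices_section_optimal {X : Type*} [MetricSpace X] [Inhabited X]
    (T : Finset (List X)) (n : ℕ) (hn : T.card = n)
    (hT : ∀ τ ∈ T, 2 ≤ τ.length)
    (p : ℝ) (hp : 1 ≤ p) (ℓ : ℕ) (hℓ : 2 ≤ ℓ)
    (c : List X) (hc : SeqLE ℓ c)
    (hcopt : ∀ c' : List X, SeqLE ℓ c' → dtwCost p p T c ≤ dtwCost p p T c')
    (W : List X → List (ℕ × ℕ))
    (hW : ∀ τ ∈ T, IsOptWarping p c τ (W τ)) :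
    ∀ j < c.length, ∀ w : X,
      ∑ τ ∈ T, (((W τ).filter fun q => q.1 = j).map
          fun q => dist (c.getD j default) (τ.getD q.2 default) ^ p).sum ≤
      ∑ τ ∈ T, (((W τ).filter fun q => q.1 = j).map
          fun q => dist w (τ.getD q.2 default) ^ p).sum := by
  intro j hj w
  have hp0 : p ≠ 0 := by positivity
  set c' : List X := c.set j w with hc'def
  have hlen : c'.length = c.length := List.length_set ..
  have hc' : SeqLE ℓ c' := by
    constructor <;> rw [hlen]
    exacts [hc.1, hc.2]
  -- getD facts
  have hgetj : c'.getD j default = w := by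
    rw [List.getD_eq_getElem _ _ (by omega)]
    simp [hc'def, List.getElem_set, hj]
  have hgetne : ∀ k, k ≠ j → c'.getD k default = c.getD k default := by
    intro k hk
    rcases lt_or_ge k c.length with h | h
    · rw [List.getD_eq_getElem _ _ (by omega), List.getD_eq_getElem _ _ h]
      simp [hc'def, List.getElem_set, hk.symm]
    · rw [List.getD_eq_default _ _ (by omega), List.getD_eq_default _ _ h]
  -- key inequality on warp costs
  have key : ∑ τ ∈ T, warpCost p c τ (W τ) ≤ ∑ τ ∈ T, warpCost p c' τ (W τ) := by
    have h1 : dtwCost p p T c = ∑ τ ∈ T, warpCost p c τ (W τ) := by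
      apply Finset.sum_congr rfl
      intro τ hτ
      rw [dtw_eq_of_opt' p hp c τ (W τ) (hW τ hτ),
        ← Real.rpow_mul (warpCost_nonneg' p c τ (W τ)),
        one_div_mul_cancel hp0, Real.rpow_one]
    have h2 : dtwCost p p T c' ≤ ∑ τ ∈ T, warpCost p c' τ (W τ) := by
      apply Finset.sum_le_sum
      intro τ hτ
      have hle : dtw p c' τ ≤ warpCost p c' τ (W τ) ^ (1 / p) := by
        apply dtw_le' p c' τ (W τ)
        rw [hlen]
        exact (hW τ hτ).1
      calc dtw p c' τ ^ p ≤ (warpCost p c' τ (W τ) ^ (1 / p)) ^ p :=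
            Real.rpow_le_rpow (dtw_nonneg' p c' τ) hle (by positivity)
        _ = warpCost p c' τ (W τ) := by
            rw [← Real.rpow_mul (warpCost_nonneg' p c' τ (W τ)),
              one_div_mul_cancel hp0, Real.rpow_one]
    calc ∑ τ ∈ T, warpCost p c τ (W τ) = dtwCost p p T c := h1.symm
      _ ≤ dtwCost p p T c' := hcopt c' hc'
      _ ≤ ∑ τ ∈ T, warpCost p c' τ (W τ) := h2
  -- decompose warp costs into section j and the rest
  have decomp : ∀ σ' : List X,
      (∀ τ ∈ T, warpCost p σ' τ (W τ) =
        (((W τ).filter fun q => q.1 = j).map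
            (fun q => dist (σ'.getD q.1 default) (τ.getD q.2 default) ^ p)).sum
        + (((W τ).filter fun q => ¬ q.1 = j).map
            (fun q => dist (σ'.getD q.1 default) (τ.getD q.2 default) ^ p)).sum) := by
    intro σ' τ hτ
    exact sum_map_split' (W τ) _ (fun q => q.1 = j)
  have hfilter_eq : ∀ τ ∈ T,
      (((W τ).filter fun q => ¬ q.1 = j).map
          (fun q => dist (c'.getD q.1 default) (τ.getD q.2 default) ^ p)).sum =
      (((W τ).filter fun q => ¬ q.1 = j).map
          (fun q => dist (c.getD q.1 default) (τ.getD q.2 default) ^ p)).sum := by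
    intro τ hτ
    congr 1
    apply List.map_congr_left
    intro q hq
    have := List.of_mem_filter hq
    simp only [decide_eq_true_eq] at this
    rw [hgetne q.1 this]
  have hsecc : ∀ τ ∈ T,
      (((W τ).filter fun q => q.1 = j).map
          (fun q => dist (c.getD q.1 default) (τ.getD q.2 default) ^ p)).sum =
      (((W τ).filter fun q => q.1 = j).map
          (fun q => dist (c.getD j default) (τ.getD q.2 default) ^ p)).sum := by
    intro τ hτ
    congr 1
    apply List.map_congr_left
    intro q hq
    have := List.of_mem_filter hq
    simp only [decide_eq_true_eq] at this
    rw [this]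
  have hsecw : ∀ τ ∈ T,
      (((W τ).filter fun q => q.1 = j).map
          (fun q => dist (c'.getD q.1 default) (τ.getD q.2 default) ^ p)).sum =
      (((W τ).filter fun q => q.1 = j).map
          (fun q => dist w (τ.getD q.2 default) ^ p)).sum := by
    intro τ hτ
    congr 1
    apply List.map_congr_left
    intro q hq
    have := List.of_mem_filter hq
    simp only [decide_eq_true_eq] at this
    rw [this, hgetj]
  rw [Finset.sum_congr rfl (decomp c), Finset.sum_congr rfl (decomp c'),
    Finset.sum_add_distrib, Finset.sum_add_distrib,
    Finset.sum_congr rfl hfilter_eq] at key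
  have := le_of_add_le_add_right key
  calc ∑ τ ∈ T, (((W τ).filter fun q => q.1 = j).map
          (fun q => dist (c.getD j default) (τ.getD q.2 default) ^ p)).sum
      = ∑ τ ∈ T, (((W τ).filter fun q => q.1 = j).map
          (fun q => dist (c.getD q.1 default) (τ.getD q.2 default) ^ p)).sum :=
        (Finset.sum_congr rfl hsecc).symm
    _ ≤ ∑ τ ∈ T, (((W τ).filter fun q => q.1 = j).map
          (fun q => dist (c'.getD q.1 default) (τ.getD q.2 default) ^ p)).sum := this
    _ = ∑ τ ∈ T, (((W τ).filter fun q => q.1 = j).map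
          (fun q => dist w (τ.getD q.2 default) ^ p)).sum :=
        Finset.sum_congr rfl hsecw
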